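/- Let ψ: C ⇢ P¹ be the birational inverse of a proper parameterization φ: P¹ → C given by u = (u₁,u₂,u₃), with ψ defined by homogeneous forms F₁, F₂ of the same degree without common factors. If T₁F₂(X) − T₂F₁(X) is irreducible, then for any bihomogeneous P(T,X) of bidegree (i,j): P(T, u(T)) = 0 in K[T₁,T₂] if and only if E(X) divides P(F₁(X), F₂(X), X), where E is the irreducible polynomial defining C. -/

import Mathlib

open MvPolynomial

/-! Since `T₁ F₂(u) = T₂ F₁(u)` and `T₁, T₂` are distinct primes, `F(u(T)) = w(T) · (T₁, T₂)` for
some `w ≠ 0`. As `P` is homogeneous of degree `i` in `T`, substituting `u` into `P(F(X), X)` gives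
`w^i · P(T, u(T))`, and `E` divides exactly the forms killed by substituting `u`. -/

namespace MvPolynomial

section

variable {σ R A : Type*} [CommSemiring R] [CommSemiring A] [Algebra R A]

theorem IsWeightedHomogeneous.comp_weight {M N : Type*} [AddCommMonoid M] [AddCommMonoid N]
    {w : σ → M} {φ : MvPolynomial σ R} {m : M} (hφ : φ.IsWeightedHomogeneous w m) (g : M →+ N) :
    φ.IsWeightedHomogeneous (g ∘ w) (g m) := by
  intro d hd
  rw [← hφ hd, Finsupp.weight_apply, Finsupp.weight_apply, Finsupp.sum, Finsupp.sum, map_sum]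
  simp only [Function.comp_apply, map_nsmul]

theorem IsWeightedHomogeneous.aeval_pow_mul {w : σ → ℕ} {φ : MvPolynomial σ R} {n : ℕ}
    (hφ : φ.IsWeightedHomogeneous w n) (c : A) (f : σ → A) :
    aeval (fun s => c ^ w s * f s) φ = c ^ n * aeval f φ := by
  rw [φ.as_sum, map_sum, map_sum, Finset.mul_sum]
  refine Finset.sum_congr rfl fun d hd => ?_
  rw [aeval_monomial, aeval_monomial, mul_left_comm, ← hφ (mem_support_iff.mp hd),
    Finsupp.weight_apply]
  simp only [Finsupp.prod, Finsupp.sum, mul_pow, Finset.prod_mul_distrib, ← pow_mul,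
    Finset.prod_pow_eq_pow_sum, smul_eq_mul, mul_comm]

end

theorem exists_eq_X_mul_of_X_mul_eq {σ R : Type*} [CommRing R] [IsDomain R] {i j : σ}
    (hij : i ≠ j) {a b : MvPolynomial σ R} (h : X i * a = X j * b) :
    ∃ c, a = X j * c ∧ b = X i * c := by
  obtain ⟨c, rfl⟩ : X i ∣ b :=
    ((X_prime (i := i)).dvd_or_dvd ⟨a, h.symm⟩).resolve_left (fun hX => hij (X_dvd_X.mp hX))
  refine ⟨c, mul_left_cancel₀ (X_ne_zero i) ?_, rfl⟩
  rw [h, mul_left_comm]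

end MvPolynomial

theorem stmt_14_general (K : Type*) [Field K] (i j : ℕ)
    (u₁ u₂ u₃ : MvPolynomial (Fin 2) K)
    (F₁ F₂ : MvPolynomial (Fin 3) K)
    (hrel : X 0 * aeval ![u₁, u₂, u₃] F₂ = X 1 * aeval ![u₁, u₂, u₃] F₁)
    (hFu : ¬(aeval ![u₁, u₂, u₃] F₁ = 0 ∧ aeval ![u₁, u₂, u₃] F₂ = 0))
    (E : MvPolynomial (Fin 3) K)
    -- `E` defines the curve: a form vanishes along the parameterization
    -- iff it is a multiple of `E`
    (hEcurve : ∀ Q : MvPolynomial (Fin 3) K, aeval ![u₁, u₂, u₃] Q = 0 ↔ E ∣ Q)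
    (P : MvPolynomial (Fin 2 ⊕ Fin 3) K)
    (hP : P.IsWeightedHomogeneous
      (Sum.elim (fun _ => ((1 : ℕ), (0 : ℕ))) (fun _ => ((0 : ℕ), (1 : ℕ))))
      (i, j)) :
    aeval (Sum.elim (fun k => X k) ![u₁, u₂, u₃]) P = 0 ↔
      E ∣ aeval (Sum.elim ![F₁, F₂] (fun k => X k)) P := by
  obtain ⟨w, hF₂, hF₁⟩ := exists_eq_X_mul_of_X_mul_eq (by decide : (0 : Fin 2) ≠ 1) hrel
  have hw : w ≠ 0 := by
    rintro rfl
    exact hFu ⟨by rw [hF₁, mul_zero], by rw [hF₂, mul_zero]⟩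
  have hPT : P.IsWeightedHomogeneous (Sum.elim (fun _ => 1) (fun _ => 0)) i := by
    convert hP.comp_weight (AddMonoidHom.fst ℕ ℕ) using 1
    · ext (k | k) <;> rfl
    · rfl
  have hsubst : aeval ![u₁, u₂, u₃] (aeval (Sum.elim ![F₁, F₂] (fun k => X k)) P) =
      w ^ i * aeval (Sum.elim (fun k => X k) ![u₁, u₂, u₃]) P := by
    have hscale : aeval (fun s => w ^ Sum.elim (fun _ => 1) (fun _ => 0) s *
        Sum.elim (fun k => X k) ![u₁, u₂, u₃] s) P =
        w ^ i * aeval (Sum.elim (fun k => X k) ![u₁, u₂, u₃]) P :=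
      hPT.aeval_pow_mul w _
    rw [← AlgHom.comp_apply, comp_aeval, ← hscale]
    congr 2
    funext s
    rcases s with k | k
    · fin_cases k
      · simpa [mul_comm] using hF₁
      · simpa [mul_comm] using hF₂
    · simp
  rw [← hEcurve, hsubst, mul_eq_zero, or_iff_right (pow_ne_zero i hw)]

/-- Let `u = (u₁,u₂,u₃)` properly parameterize the irreducible curve `E = 0`
(so that a polynomial vanishes on the curve iff it is divisible by `E`), with
inverse given by coprime forms `F₁, F₂` of the same degree, satisfying
`T₁F₂(u(T)) = T₂F₁(u(T))` with `(F₁(u), F₂(u)) ≠ (0,0)`, and with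
`T₁F₂(X) − T₂F₁(X)` irreducible. Then for any bihomogeneous `P(T,X)` of
bidegree `(i,j)`: `P(T, u(T)) = 0` if and only if `E(X)` divides
`P(F₁(X), F₂(X), X)`. -/
theorem stmt_14 (K : Type*) [Field K] [IsAlgClosed K] (d ν i j : ℕ)
    (u₁ u₂ u₃ : MvPolynomial (Fin 2) K)
    (hu₁ : u₁.IsHomogeneous d) (hu₂ : u₂.IsHomogeneous d)
    (hu₃ : u₃.IsHomogeneous d)
    (hucop : ∀ g : MvPolynomial (Fin 2) K, g ∣ u₁ → g ∣ u₂ → g ∣ u₃ → IsUnit g)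
    (F₁ F₂ : MvPolynomial (Fin 3) K)
    (hF₁ : F₁.IsHomogeneous ν) (hF₂ : F₂.IsHomogeneous ν)
    (hFcop : IsRelPrime F₁ F₂)
    (hrel : X 0 * aeval ![u₁, u₂, u₃] F₂ = X 1 * aeval ![u₁, u₂, u₃] F₁)
    (hFu : ¬(aeval ![u₁, u₂, u₃] F₁ = 0 ∧ aeval ![u₁, u₂, u₃] F₂ = 0))
    (E : MvPolynomial (Fin 3) K) (hE : Irreducible E)
    -- `E` defines the curve: a form vanishes along the parameterization
    -- iff it is a multiple of `E`
    (hEcurve : ∀ Q : MvPolynomial (Fin 3) K, aeval ![u₁, u₂, u₃] Q = 0 ↔ E ∣ Q)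
    (hGirr : Irreducible
      (X (Sum.inl 0) * rename Sum.inr F₂ - X (Sum.inl 1) * rename Sum.inr F₁ :
        MvPolynomial (Fin 2 ⊕ Fin 3) K))
    (P : MvPolynomial (Fin 2 ⊕ Fin 3) K)
    (hP : P.IsWeightedHomogeneous
      (Sum.elim (fun _ => ((1 : ℕ), (0 : ℕ))) (fun _ => ((0 : ℕ), (1 : ℕ))))
      (i, j)) :
    aeval (Sum.elim (fun k => X k) ![u₁, u₂, u₃]) P = 0 ↔
      E ∣ aeval (Sum.elim ![F₁, F₂] (fun k => X k)) P :=
  stmt_14_general K i j u₁ u₂ u₃ F₁ F₂ hrel hFu E hEcurve P hP
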